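/- arXiv:2008.10340 — 5 statements merged into one kernel-verified Lean document; each statement's English description precedes it below -/
import Mathlib

section
/- Let x* ∈ (a,b], ω a non-decreasing nonnegative function, and {f_n} a sequence of BV functions from [a,b] to a metric space X satisfying ω⁻(v_{f_n}, x*, δ) ≤ ω(δ) for 0 < δ ≤ δ_0 and all n, where v_{f_n} is the variation function of f_n. If f^∞ is the pointwise limit of f_n on [a,b], then ω⁻(v_{f^∞}, x*, δ) ≤ ω(δ) for 0 < δ ≤ δ_0. -/
/-!
For `x ≤ xs` with `x ∈ [a, b]`, the increment `v(xs) - v(x)` of a variation function is the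
variation on `[a, b] ∩ [x, xs]`, so the hypothesis bounds that variation of every `f n` by `ω δ`. Variation is lower
semicontinuous under pointwise convergence, hence the same bound holds for `g`, and the increment
of `v_g` is at most the variation of `g` on `[x, xs]`.
-/

open Set Filter Topology

/-- Left local modulus of continuity `ω⁻(f,xs,δ)`. -/
noncomputable def omegaMinus {X : Type*} [PseudoEMetricSpace X]
    (f : ℝ → X) (a b xs δ : ℝ) : ENNReal :=
  ⨆ x ∈ Set.Icc (xs - δ) xs ∩ Set.Icc a b, edist (f x) (f xs)

open scoped ENNReal

namespace ENNReal

theorem edist_toReal_toReal_add {A B : ℝ≥0∞} (hA : A ≠ ⊤) (hB : B ≠ ⊤) :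
    edist A.toReal (A + B).toReal = B := by
  rw [edist_dist, Real.dist_eq, toReal_add hA hB, sub_add_cancel_left, abs_neg,
    abs_of_nonneg toReal_nonneg, ofReal_toReal hB]

/-- Without finiteness this is only an inequality: if `A = ⊤` both sides of the distance are the
junk value `0`. -/
theorem edist_toReal_toReal_add_le (A B : ℝ≥0∞) : edist A.toReal (A + B).toReal ≤ B := by
  rcases eq_or_ne A ⊤ with rfl | hA
  · simp
  rcases eq_or_ne B ⊤ with rfl | hB
  · exact le_top
  exact (edist_toReal_toReal_add hA hB).le

end ENNReal

section Variation

variable {α E : Type*} [LinearOrder α] [PseudoEMetricSpace E] {f : α → E} {s : Set α}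
  {a x y : α}

theorem edist_variationOnFromTo_le_eVariationOn (hax : a ≤ x) (hxy : x ≤ y) (hx : x ∈ s) :
    edist (variationOnFromTo f s a x) (variationOnFromTo f s a y)
      ≤ eVariationOn f (s ∩ Icc x y) := by
  rw [variationOnFromTo.eq_of_le f s hax, variationOnFromTo.eq_of_le f s (hax.trans hxy),
    ← eVariationOn.Icc_add_Icc f hax hxy hx]
  exact ENNReal.edist_toReal_toReal_add_le _ _

theorem edist_variationOnFromTo_eq_eVariationOn (hf : BoundedVariationOn f s) (hax : a ≤ x)
    (hxy : x ≤ y) (hx : x ∈ s) :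
    edist (variationOnFromTo f s a x) (variationOnFromTo f s a y)
      = eVariationOn f (s ∩ Icc x y) := by
  rw [variationOnFromTo.eq_of_le f s hax, variationOnFromTo.eq_of_le f s (hax.trans hxy),
    ← eVariationOn.Icc_add_Icc f hax hxy hx]
  exact ENNReal.edist_toReal_toReal_add (hf.mono inter_subset_left) (hf.mono inter_subset_left)

theorem eVariationOn_le_of_tendsto {ι : Type*} {F : ι → α → E} {p : Filter ι} [p.NeBot]
    {g : α → E} (hF : ∀ x ∈ s, Tendsto (fun i => F i x) p (𝓝 (g x))) {c : ℝ≥0∞}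
    (hc : ∀ᶠ i in p, eVariationOn (F i) s ≤ c) : eVariationOn g s ≤ c := by
  by_contra! hlt
  obtain ⟨i, hi, hic⟩ := ((eVariationOn.lowerSemicontinuous_aux hF hlt).and hc).exists
  exact hi.not_ge hic

end Variation

theorem omegaMinus_le_iff {X : Type*} [PseudoEMetricSpace X] {f : ℝ → X} {a b xs δ : ℝ}
    {c : ℝ≥0∞} :
    omegaMinus f a b xs δ ≤ c ↔ ∀ x ∈ Icc (xs - δ) xs ∩ Icc a b, edist (f x) (f xs) ≤ c :=
  iSup₂_le_iff

theorem omegaMinus_variationFunction_pointwise_limit_le_general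
    {X : Type*} [MetricSpace X] (a b δ₀ : ℝ)
    (xs : ℝ)
    (ω : ℝ → ℝ)
    (f : ℕ → ℝ → X) (hbv : ∀ n, BoundedVariationOn (f n) (Set.Icc a b))
    (g : ℝ → X)
    (hb : ∀ n : ℕ, ∀ δ ∈ Set.Ioc (0:ℝ) δ₀,
      omegaMinus (fun x => variationOnFromTo (f n) (Set.Icc a b) a x) a b xs δ
        ≤ ENNReal.ofReal (ω δ))
    (hconv : ∀ x ∈ Set.Icc a b, Tendsto (fun n => f n x) atTop (𝓝 (g x))) :
    ∀ δ ∈ Set.Ioc (0:ℝ) δ₀,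
      omegaMinus (fun x => variationOnFromTo g (Set.Icc a b) a x) a b xs δ
        ≤ ENNReal.ofReal (ω δ) := by
  intro δ hδ
  refine omegaMinus_le_iff.2 fun x hx => ?_
  have hxxs : x ≤ xs := hx.1.2
  have hxab : x ∈ Icc a b := hx.2
  have hfn : ∀ n, eVariationOn (f n) (Icc a b ∩ Icc x xs) ≤ ENNReal.ofReal (ω δ) := fun n => by
    rw [← edist_variationOnFromTo_eq_eVariationOn (hbv n) hxab.1 hxxs hxab]
    exact omegaMinus_le_iff.1 (hb n δ hδ) x hx
  calc edist (variationOnFromTo g (Icc a b) a x) (variationOnFromTo g (Icc a b) a xs)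
      ≤ eVariationOn g (Icc a b ∩ Icc x xs) :=
        edist_variationOnFromTo_le_eVariationOn hxab.1 hxxs hxab
    _ ≤ ENNReal.ofReal (ω δ) :=
        eVariationOn_le_of_tendsto (fun y hy => hconv y hy.1) (Eventually.of_forall hfn)

/-- Let `xs ∈ (a,b]`, `ω` a non-decreasing nonnegative function, and `f n : [a,b] → X`
a sequence of BV functions satisfying `ω⁻(v_{f n}, xs, δ) ≤ ω(δ)` for `0 < δ ≤ δ₀` and
all `n`, where `v_{f n}(x) = V_a^x(f n)` is the variation function. If `g` is the
pointwise limit of `f n` on `[a,b]`, then `ω⁻(v_g, xs, δ) ≤ ω(δ)` for `0 < δ ≤ δ₀`. -/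
theorem omegaMinus_variationFunction_pointwise_limit_le
    {X : Type*} [MetricSpace X] (a b δ₀ : ℝ) (hδ₀ : 0 < δ₀)
    (xs : ℝ) (hxs : xs ∈ Set.Ioc a b)
    (ω : ℝ → ℝ) (hω : Monotone ω) (hωnn : ∀ δ, 0 ≤ ω δ)
    (f : ℕ → ℝ → X) (hbv : ∀ n, BoundedVariationOn (f n) (Set.Icc a b))
    (g : ℝ → X)
    (hb : ∀ n : ℕ, ∀ δ ∈ Set.Ioc (0:ℝ) δ₀,
      omegaMinus (fun x => variationOnFromTo (f n) (Set.Icc a b) a x) a b xs δ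
        ≤ ENNReal.ofReal (ω δ))
    (hconv : ∀ x ∈ Set.Icc a b, Tendsto (fun n => f n x) atTop (𝓝 (g x))) :
    ∀ δ ∈ Set.Ioc (0:ℝ) δ₀,
      omegaMinus (fun x => variationOnFromTo g (Set.Icc a b) a x) a b xs δ
        ≤ ENNReal.ofReal (ω δ) :=
  omegaMinus_variationFunction_pointwise_limit_le_general a b δ₀ xs ω f hbv g hb hconv
end

section
/- For f ∈ BV[−π,π], the Fourier coefficients a_n(f) = (1/π)∫_{−π}^{π} f(t) cos(nt) dt and b_n(f) = (1/π)∫_{−π}^{π} f(t) sin(nt) dt satisfy |a_n(f)| ≤ 2V/(πn) and |b_n(f)| ≤ 2V/(πn) for all n ≥ 1, where V = V_{−π}^{π}(f). -/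
/-! With `h = π / n`, the function `c = cos (n ·)` (or `sin (n ·)`) satisfies `c (t + h) = -c t`,
so `2 ∫ f c = ∫ (f t - f (t + h)) c t`, which is at most `∫ |f (t + h) - f t|` over a period.
If `p` is the variation function of `f`, then `|f (t + h) - f t| ≤ p (t + h) - p t`, and since
`p (t + T) - p t` is the variation `V` of `f` over a period `T`, the integral of `p (t + h) - p t`
over a period is `h V`. Hence `|a_n|, |b_n| ≤ V / (2n) ≤ 2V / (πn)`. -/

open Set Function MeasureTheory Real

namespace Function.Periodic

variable {E : Type*} [PseudoEMetricSpace E] {f : ℝ → E} {T : ℝ}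

theorem eVariationOn_Icc_add_const (hf : Periodic f T) (x y : ℝ) :
    eVariationOn f (Icc (x + T) (y + T)) = eVariationOn f (Icc x y) := by
  have h := eVariationOn.comp_eq_of_monotoneOn f (· + T)
    ((monotone_id.add_const T).monotoneOn (Icc x y))
  rwa [image_add_const_Icc, show f ∘ (· + T) = f from funext hf, eq_comm] at h

theorem eVariationOn_Icc_add_nat_mul (hf : Periodic f T) (hT : 0 ≤ T) (a : ℝ) (k : ℕ) :
    eVariationOn f (Icc a (a + k * T)) = k * eVariationOn f (Icc a (a + T)) := by
  induction k with
  | zero => simp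
  | succ k ih =>
    have hsplit := eVariationOn.Icc_add_Icc f (s := univ) (a := a) (b := a + k * T)
      (c := a + (k + 1 : ℕ) * T) (le_add_of_nonneg_right (by positivity))
      (by push_cast; linarith) (mem_univ _)
    have hshift := (hf.nat_mul k).eVariationOn_Icc_add_const a (a + T)
    simp only [univ_inter] at hsplit
    rw [← hsplit, ih, show a + (k + 1 : ℕ) * T = a + T + k * T by push_cast; ring, hshift]
    push_cast
    ring

theorem locallyBoundedVariationOn (hf : Periodic f T) (hT : 0 < T) {a : ℝ}
    (hbv : BoundedVariationOn f (Icc a (a + T))) : LocallyBoundedVariationOn f univ := by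
  intro x y _ _
  obtain ⟨k, hk⟩ := exists_nat_ge (max (a - x) (y - a) / T)
  rw [div_le_iff₀ hT, max_le_iff] at hk
  have hsub : univ ∩ Icc x y ⊆ Icc (a - k * T) (a - k * T + (2 * k : ℕ) * T) := by
    rintro t ⟨-, htx, hty⟩
    constructor <;> push_cast <;> linarith
  refine BoundedVariationOn.mono ?_ hsub
  rw [BoundedVariationOn, ← (hf.nat_mul k).eVariationOn_Icc_add_const, sub_add_cancel,
    show a - k * T + (2 * k : ℕ) * T + k * T = a + (2 * k : ℕ) * T by push_cast; ring,
    hf.eVariationOn_Icc_add_nat_mul hT.le]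
  exact ENNReal.mul_ne_top (ENNReal.natCast_ne_top _) hbv

theorem eVariationOn_Icc_self_add_eq_of_mem (hf : Periodic f T) {a t : ℝ}
    (ht : t ∈ Icc a (a + T)) :
    eVariationOn f (Icc t (t + T)) = eVariationOn f (Icc a (a + T)) := by
  have h₁ := eVariationOn.Icc_add_Icc f (s := univ) ht.1 ht.2 (mem_univ t)
  have h₂ := eVariationOn.Icc_add_Icc f (s := univ) (c := t + T) ht.2 (by linarith [ht.1])
    (mem_univ (a + T))
  simp only [univ_inter] at h₁ h₂
  rw [← h₁, ← h₂, hf.eVariationOn_Icc_add_const, add_comm]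

end Function.Periodic

theorem LocallyBoundedVariationOn.intervalIntegrable {f : ℝ → ℝ}
    (hf : LocallyBoundedVariationOn f univ) (a b : ℝ) : IntervalIntegrable f volume a b := by
  have hp := monotoneOn_univ.mp (variationOnFromTo.monotoneOn hf (mem_univ a))
  have hq := monotoneOn_univ.mp (variationOnFromTo.sub_self_monotoneOn hf (mem_univ a))
  simpa using hp.intervalIntegrable.sub hq.intervalIntegrable

theorem intervalIntegral.integral_comp_add_sub_comm {E : Type*} [NormedAddCommGroup E]
    [NormedSpace ℝ E] {p : ℝ → E} (hp : ∀ x y, IntervalIntegrable p volume x y) (a h T : ℝ) :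
    ∫ t in a..a + T, (p (t + h) - p t) = ∫ t in a..a + h, (p (t + T) - p t) := by
  have hshift (c x y : ℝ) : IntervalIntegrable (fun t => p (t + c)) volume x y :=
    (IntervalIntegrable.comp_add_right_iff).mpr (hp _ _)
  rw [integral_sub (hshift _ _ _) (hp _ _), integral_sub (hshift _ _ _) (hp _ _),
    integral_comp_add_right, integral_comp_add_right,
    add_right_comm a h T, ← integral_add_adjacent_intervals (hp _ (a + T)) (hp _ _),
    ← integral_add_adjacent_intervals (hp a (a + h)) (hp _ _)]
  abel

namespace Function.Periodic

variable {f : ℝ → ℝ} {T a h : ℝ}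

theorem integral_abs_sub_comp_add_le (hf : Periodic f T) (hT : 0 < T)
    (hbv : BoundedVariationOn f (Icc a (a + T))) (h0 : 0 ≤ h) (hhT : h ≤ T) :
    ∫ t in a..a + T, |f (t + h) - f t| ≤ h * (eVariationOn f (Icc a (a + T))).toReal := by
  have hlbv := hf.locallyBoundedVariationOn hT hbv
  set p := variationOnFromTo f univ a with hp_def
  have hp : Monotone p := monotoneOn_univ.mp (variationOnFromTo.monotoneOn hlbv (mem_univ a))
  have hf_le (t : ℝ) : |f (t + h) - f t| ≤ p (t + h) - p t :=
    variationOnFromTo.abs_sub_le_sub_of_le hlbv (mem_univ a) (mem_univ t) (mem_univ _)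
      (by linarith)
  have hp_period (t : ℝ) (ht : t ∈ uIcc a (a + h)) :
      p (t + T) - p t = (eVariationOn f (Icc a (a + T))).toReal := by
    rw [uIcc_of_le (by linarith)] at ht
    rw [sub_eq_iff_eq_add', hp_def,
      ← variationOnFromTo.add hlbv (mem_univ a) (mem_univ t) (mem_univ _),
      variationOnFromTo.eq_of_le f univ (le_add_of_nonneg_right hT.le), univ_inter,
      hf.eVariationOn_Icc_self_add_eq_of_mem ⟨ht.1, by linarith [ht.2]⟩]
  calc ∫ t in a..a + T, |f (t + h) - f t|
      ≤ ∫ t in a..a + T, (p (t + h) - p t) :=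
        intervalIntegral.integral_mono_on (by linarith)
          (((IntervalIntegrable.comp_add_right_iff).mpr (hlbv.intervalIntegrable _ _)).sub
            (hlbv.intervalIntegrable _ _)).abs
          ((hp.comp (monotone_id.add_const h)).intervalIntegrable.sub hp.intervalIntegrable)
          fun t _ => hf_le t
    _ = ∫ t in a..a + h, (p (t + T) - p t) :=
        intervalIntegral.integral_comp_add_sub_comm (fun _ _ => hp.intervalIntegrable) a h T
    _ = h * (eVariationOn f (Icc a (a + T))).toReal := by
        rw [intervalIntegral.integral_congr hp_period]
        simp

theorem abs_integral_mul_le_of_antiperiodic (hf : Periodic f T) (hT : 0 < T)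
    (hbv : BoundedVariationOn f (Icc a (a + T))) {c : ℝ → ℝ} (hc : Continuous c)
    (hcT : Periodic c T) (hch : Antiperiodic c h) (hc1 : ∀ x, |c x| ≤ 1) (h0 : 0 ≤ h)
    (hhT : h ≤ T) :
    |∫ t in a..a + T, f t * c t| ≤ h * (eVariationOn f (Icc a (a + T))).toReal / 2 := by
  have hf_int := (hf.locallyBoundedVariationOn hT hbv).intervalIntegrable
  have hfh_int : IntervalIntegrable (fun t => f (t + h)) volume a (a + T) :=
    (IntervalIntegrable.comp_add_right_iff).mpr (hf_int _ _)
  have hshift : ∫ t in a..a + T, f (t + h) * c t = -∫ t in a..a + T, f t * c t := by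
    calc ∫ t in a..a + T, f (t + h) * c t
        = -∫ t in a..a + T, f (t + h) * c (t + h) := by
          simp only [hch _, mul_neg, intervalIntegral.integral_neg, neg_neg]
      _ = -∫ t in a + h..a + h + T, f t * c t := by
          rw [intervalIntegral.integral_comp_add_right (fun t => f t * c t), add_right_comm]
      _ = -∫ t in a..a + T, f t * c t :=
          congrArg Neg.neg ((hf.mul hcT).intervalIntegral_add_eq (a + h) a)
  have hdouble :
      2 * ∫ t in a..a + T, f t * c t = ∫ t in a..a + T, (f t - f (t + h)) * c t := by
    simp_rw [sub_mul]
    rw [intervalIntegral.integral_sub ((hf_int _ _).mul_continuousOn hc.continuousOn)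
      (hfh_int.mul_continuousOn hc.continuousOn), hshift]
    ring
  have hbound : |2 * ∫ t in a..a + T, f t * c t| ≤
      h * (eVariationOn f (Icc a (a + T))).toReal := by
    rw [hdouble, ← Real.norm_eq_abs]
    refine (intervalIntegral.norm_integral_le_of_norm_le (by linarith) ?_
      (hfh_int.sub (hf_int _ _)).abs).trans (hf.integral_abs_sub_comp_add_le hT hbv h0 hhT)
    refine .of_forall fun t _ => ?_
    rw [Real.norm_eq_abs, abs_mul, abs_sub_comm]
    exact mul_le_of_le_one_right (abs_nonneg _) (hc1 t)
  rw [abs_mul, abs_two] at hbound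
  linarith

end Function.Periodic

/-- For a `2π`-periodic function `f` of bounded variation on `[−π,π]` with total
variation `V`, the Fourier coefficients satisfy `|a_n(f)| ≤ 2V/(πn)` and
`|b_n(f)| ≤ 2V/(πn)` for `n ≥ 1`. -/
theorem fourier_coeff_bound_of_bv
    (f : ℝ → ℝ) (hper : Function.Periodic f (2 * Real.pi))
    (hbv : BoundedVariationOn f (Set.Icc (-Real.pi) Real.pi))
    (n : ℕ) (hn : 1 ≤ n) :
    |(1 / Real.pi) * ∫ t in (-Real.pi)..Real.pi, f t * Real.cos (n * t)| ≤
      2 * (eVariationOn f (Set.Icc (-Real.pi) Real.pi)).toReal / (Real.pi * n) ∧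
    |(1 / Real.pi) * ∫ t in (-Real.pi)..Real.pi, f t * Real.sin (n * t)| ≤
      2 * (eVariationOn f (Set.Icc (-Real.pi) Real.pi)).toReal / (Real.pi * n) := by
  have hn0 : (0 : ℝ) < n := by exact_mod_cast hn
  have hperiod : -π + 2 * π = π := by ring
  set V := (eVariationOn f (Icc (-π) π)).toReal
  have hV : 0 ≤ V := ENNReal.toReal_nonneg
  have key (c : ℝ → ℝ) (hc : Continuous c) (hcT : Periodic c (2 * π))
      (hch : Antiperiodic c ((n : ℝ)⁻¹ * π)) (hc1 : ∀ x, |c x| ≤ 1) :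
      |1 / π * ∫ t in -π..π, f t * c t| ≤ 2 * V / (π * n) := by
    have hI := hper.abs_integral_mul_le_of_antiperiodic two_pi_pos (a := -π)
      (by rwa [hperiod]) hc hcT hch hc1 (by positivity)
      (by rw [inv_mul_le_iff₀ hn0]; nlinarith [pi_pos, (by exact_mod_cast hn : (1 : ℝ) ≤ n)])
    rw [hperiod] at hI
    rw [abs_mul, abs_of_pos (by positivity)]
    calc 1 / π * |∫ t in -π..π, f t * c t| ≤ 1 / π * ((n : ℝ)⁻¹ * π * V / 2) := by gcongr
      _ = V / (2 * n) := by field_simp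
      _ ≤ 2 * V / (π * n) := by
        rw [div_le_div_iff₀ (by positivity) (by positivity)]
        nlinarith [pi_le_four, mul_nonneg hV hn0.le]
  refine ⟨key _ (by fun_prop) (fun x => ?_) (cos_antiperiodic.const_mul hn0.ne')
      fun x => abs_cos_le_one _,
    key _ (by fun_prop) (fun x => ?_) (sin_antiperiodic.const_mul hn0.ne')
      fun x => abs_sin_le_one _⟩
  · simp only [mul_add, cos_add_nat_mul_two_pi]
  · simp only [mul_add, sin_add_nat_mul_two_pi]
end

section
/- Let F, k : [a,b] → ℝ-valued data be of bounded variation, where F : [a,b] → K(ℝ^d) is a set-valued function with compact values and k : [a,b] → ℝ. For any partition χ = {a = x_0 < ⋯ < x_n = b}, the Hausdorff distance between the right weighted metric Riemann sum ⊕_{i=0}^{n−1}(x_{i+1}−x_i)k(x_{i+1})F(x_{i+1}) and the left weighted metric Riemann sum ⊕_{i=0}^{n−1}(x_{i+1}−x_i)k(x_i)F(x_i) is at most |χ|(‖k‖_∞ V_a^b(F) + ‖F‖_∞ V_a^b(k)), where |χ| is the mesh of the partition. -/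
/-!
A point of the right sum is `Σ μᵢ yᵢ` for a metric chain `(y₀, …, yₙ)` of
`(F x₁, …, F xₙ₊₁)`. Prepending a nearest point of `F x₀` to `y₀` gives a metric chain `Y` of
the whole family `(F x₀, …, F xₙ₊₁)`; its first `n + 1` entries are a metric chain of the left
family, so `Σ νᵢ Yᵢ` lies in the left sum (appending a nearest point of `F xₙ₊₁` does the same in
the other direction). Hence both directions reduce to bounding `‖Σ μᵢ Yᵢ₊₁ - Σ νᵢ Yᵢ‖` for a
single chain `Y`, which is at most `Σ |μᵢ| ‖Yᵢ₊₁ - Yᵢ‖ + |μᵢ - νᵢ| ‖Yᵢ‖`. Consecutive entries of a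
metric chain are at most the Hausdorff distance apart, and the increments of `F` and `k` along
the partition sum to at most their variations.
-/

open Set Filter Topology

/-- `(p,q)` is a metric pair of `(A,B)`: `p ∈ A`, `q ∈ B` and `p` is a projection of
`q` on `A` or `q` is a projection of `p` on `B`. -/
def IsMetricPair {E : Type*} [MetricSpace E] (A B : Set E) (p q : E) : Prop :=
  p ∈ A ∧ q ∈ B ∧ (dist q p = Metric.infDist q A ∨ dist p q = Metric.infDist p B)

/-- The metric linear combination `⊕ λ_i A_i` of sets `A_0, …, A_n`:
all sums `Σ λ_i a_i` over metric chains `(a_0, …, a_n)` of `(A_0, …, A_n)`. -/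
def metricLinComb {E : Type*} [NormedAddCommGroup E] [NormedSpace ℝ E] [MetricSpace E]
    {n : ℕ} (lam : Fin (n+1) → ℝ) (A : Fin (n+1) → Set E) : Set E :=
  {z | ∃ y : Fin (n+1) → E, (∀ i, y i ∈ A i) ∧
    (∀ i : Fin n, IsMetricPair (A i.castSucc) (A i.succ) (y i.castSucc) (y i.succ)) ∧
    z = ∑ i, lam i • y i}

theorem IsMetricPair.dist_le_hausdorffDist {E : Type*} [MetricSpace E] {A B : Set E} {p q : E}
    (h : IsMetricPair A B p q) (hfin : Metric.hausdorffEDist A B ≠ ⊤) :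
    dist p q ≤ Metric.hausdorffDist A B := by
  obtain ⟨hp, hq, hd | hd⟩ := h
  · rw [dist_comm, hd, Metric.hausdorffDist_comm]
    exact Metric.infDist_le_hausdorffDist_of_mem hq (by rwa [Metric.hausdorffEDist_comm])
  · rw [hd]
    exact Metric.infDist_le_hausdorffDist_of_mem hp hfin

def IsMetricChain {E : Type*} [MetricSpace E] {n : ℕ} (A : Fin (n+1) → Set E)
    (y : Fin (n+1) → E) : Prop :=
  (∀ i, y i ∈ A i) ∧
    ∀ i : Fin n, IsMetricPair (A i.castSucc) (A i.succ) (y i.castSucc) (y i.succ)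

namespace IsMetricChain

variable {E : Type*} [MetricSpace E] {n : ℕ} {A : Fin (n+2) → Set E}

theorem tail {Y : Fin (n+2) → E} (hY : IsMetricChain A Y) :
    IsMetricChain (fun i => A i.succ) (fun i => Y i.succ) :=
  ⟨fun i => hY.1 i.succ, fun i => hY.2 i.succ⟩

theorem init {Y : Fin (n+2) → E} (hY : IsMetricChain A Y) :
    IsMetricChain (fun i => A i.castSucc) (fun i => Y i.castSucc) :=
  ⟨fun i => hY.1 i.castSucc, fun i => hY.2 i.castSucc⟩

theorem exists_cons (hA : IsCompact (A 0)) (hne : (A 0).Nonempty) {y : Fin (n+1) → E}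
    (hy : IsMetricChain (fun i => A i.succ) y) :
    ∃ p, IsMetricChain A (Fin.cons p y) := by
  obtain ⟨p, hp, hproj⟩ := hA.exists_infDist_eq_dist hne (y 0)
  refine ⟨p, fun i => Fin.cases hp hy.1 i, fun i => Fin.cases ?_ (fun j => ?_) i⟩
  · exact ⟨hp, hy.1 0, Or.inl hproj.symm⟩
  · simpa only [← Fin.succ_castSucc, Fin.cons_succ] using hy.2 j

theorem exists_snoc (hA : IsCompact (A (Fin.last _))) (hne : (A (Fin.last _)).Nonempty)
    {y : Fin (n+1) → E} (hy : IsMetricChain (fun i => A i.castSucc) y) :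
    ∃ q, IsMetricChain A (Fin.snoc y q) := by
  obtain ⟨q, hq, hproj⟩ := hA.exists_infDist_eq_dist hne (y (Fin.last n))
  refine ⟨q, fun i => Fin.lastCases ?_ (fun j => ?_) i, fun i => Fin.lastCases ?_ (fun j => ?_) i⟩
  · simpa only [Fin.snoc_last] using hq
  · simpa only [Fin.snoc_castSucc] using hy.1 j
  · rw [Fin.succ_last, Fin.snoc_last, Fin.snoc_castSucc]
    exact ⟨hy.1 (Fin.last n), hq, Or.inr hproj.symm⟩
  · rw [Fin.succ_castSucc, Fin.snoc_castSucc, Fin.snoc_castSucc]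
    exact hy.2 j

end IsMetricChain

section MetricLinComb

variable {E : Type*} [NormedAddCommGroup E] [NormedSpace ℝ E] {n : ℕ}

theorem mem_metricLinComb {lam : Fin (n+1) → ℝ} {A : Fin (n+1) → Set E} {z : E} :
    z ∈ metricLinComb lam A ↔ ∃ y, IsMetricChain A y ∧ z = ∑ i, lam i • y i :=
  exists_congr fun _ => and_assoc.symm

theorem hausdorffDist_metricLinComb_succ_castSucc_le {A : Fin (n+2) → Set E}
    (hA₀ : IsCompact (A 0)) (hne₀ : (A 0).Nonempty)
    (hA₁ : IsCompact (A (Fin.last _))) (hne₁ : (A (Fin.last _)).Nonempty)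
    (μ ν : Fin (n+1) → ℝ) {r : ℝ} (hr₀ : 0 ≤ r)
    (hr : ∀ Y, IsMetricChain A Y → dist (∑ i, μ i • Y i.succ) (∑ i, ν i • Y i.castSucc) ≤ r) :
    Metric.hausdorffDist (metricLinComb μ fun i => A i.succ)
      (metricLinComb ν fun i => A i.castSucc) ≤ r := by
  refine Metric.hausdorffDist_le_of_mem_dist hr₀ (fun z hz => ?_) (fun z hz => ?_)
  · obtain ⟨y, hy, rfl⟩ := mem_metricLinComb.1 hz
    obtain ⟨p, hY⟩ := hy.exists_cons hA₀ hne₀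
    refine ⟨_, mem_metricLinComb.2 ⟨_, hY.init, rfl⟩, ?_⟩
    simpa only [Fin.cons_succ] using hr _ hY
  · obtain ⟨y, hy, rfl⟩ := mem_metricLinComb.1 hz
    obtain ⟨q, hY⟩ := hy.exists_snoc hA₁ hne₁
    refine ⟨_, mem_metricLinComb.2 ⟨_, hY.tail, rfl⟩, ?_⟩
    simpa only [Fin.snoc_castSucc, dist_comm] using hr _ hY

end MetricLinComb

theorem eVariationOn.sum_fin_le {α E : Type*} [LinearOrder α] [PseudoEMetricSpace E]
    {f : α → E} {s : Set α} {n : ℕ} {x : Fin (n+1) → α} (hx : Monotone x)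
    (hxs : ∀ i, x i ∈ s) :
    ∑ i : Fin n, edist (f (x i.castSucc)) (f (x i.succ)) ≤ eVariationOn f s := by
  set u : ℕ → α := fun m => x ⟨min m n, by omega⟩
  have hu : Monotone u := fun m m' hm => hx (by simp only [Fin.mk_le_mk]; omega)
  calc ∑ i : Fin n, edist (f (x i.castSucc)) (f (x i.succ))
      = ∑ i ∈ Finset.range n, edist (f (u (i+1))) (f (u i)) := by
        rw [← Fin.sum_univ_eq_sum_range]
        refine Finset.sum_congr rfl fun i _ => ?_
        rw [edist_comm]
        congr 4 <;> ext <;> simp only [Fin.val_succ, Fin.val_castSucc] <;> omega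
    _ ≤ eVariationOn f s := eVariationOn.sum_le hu fun m => hxs _

theorem BoundedVariationOn.sum_fin_dist_le {α E : Type*} [LinearOrder α] [PseudoMetricSpace E]
    {f : α → E} {s : Set α} (hf : BoundedVariationOn f s) {n : ℕ} {x : Fin (n+1) → α}
    (hx : Monotone x) (hxs : ∀ i, x i ∈ s) :
    ∑ i : Fin n, dist (f (x i.castSucc)) (f (x i.succ)) ≤ (eVariationOn f s).toReal := by
  simp only [dist_edist]
  rw [← ENNReal.toReal_sum fun i _ => edist_ne_top _ _]
  exact ENNReal.toReal_mono hf (eVariationOn.sum_fin_le hx hxs)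

theorem dist_sum_smul_sum_smul_le {ι E : Type*} [SeminormedAddCommGroup E] [NormedSpace ℝ E]
    (s : Finset ι) (a b : ι → ℝ) (u v : ι → E) :
    dist (∑ i ∈ s, a i • u i) (∑ i ∈ s, b i • v i) ≤
      ∑ i ∈ s, (|a i| * dist (u i) (v i) + |a i - b i| * ‖v i‖) := by
  rw [dist_eq_norm, ← Finset.sum_sub_distrib]
  refine (norm_sum_le _ _).trans (Finset.sum_le_sum fun i _ => ?_)
  calc ‖a i • u i - b i • v i‖ = ‖a i • (u i - v i) + (a i - b i) • v i‖ := by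
        congr 1; module
    _ ≤ |a i| * dist (u i) (v i) + |a i - b i| * ‖v i‖ := by
        refine (norm_add_le _ _).trans_eq ?_
        rw [norm_smul, norm_smul, Real.norm_eq_abs, Real.norm_eq_abs, dist_eq_norm]

theorem BoundedVariationOn.sum_fin_add_le {α E E' : Type*} [LinearOrder α] [PseudoMetricSpace E]
    [PseudoMetricSpace E'] {f : α → E} {g : α → E'} {s : Set α} (hf : BoundedVariationOn f s)
    (hg : BoundedVariationOn g s) {n : ℕ} {x : Fin (n+1) → α} (hx : Monotone x)
    (hxs : ∀ i, x i ∈ s) {c c' : ℝ} (hc : 0 ≤ c) (hc' : 0 ≤ c') :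
    ∑ i : Fin n, (c * dist (f (x i.castSucc)) (f (x i.succ))
        + c' * dist (g (x i.castSucc)) (g (x i.succ))) ≤
      c * (eVariationOn f s).toReal + c' * (eVariationOn g s).toReal := by
  rw [Finset.sum_add_distrib, ← Finset.mul_sum, ← Finset.mul_sum]
  gcongr
  exacts [hf.sum_fin_dist_le hx hxs, hg.sum_fin_dist_le hx hxs]

theorem hausdorffDist_weighted_metric_riemann_sums_general {d : ℕ}
    (a b : ℝ)
    (F : ℝ → TopologicalSpace.NonemptyCompacts (EuclideanSpace ℝ (Fin d)))
    (k : ℝ → ℝ)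
    (hF : BoundedVariationOn F (Set.Icc a b))
    (hk : BoundedVariationOn k (Set.Icc a b))
    (MF Mk : ℝ)
    (hMF : ∀ x ∈ Set.Icc a b, ∀ y ∈ (F x : Set (EuclideanSpace ℝ (Fin d))), ‖y‖ ≤ MF)
    (hMk : ∀ x ∈ Set.Icc a b, |k x| ≤ Mk)
    (n : ℕ) (x : Fin (n+2) → ℝ) (hmono : StrictMono x)
    (hxa : x 0 = a) (hxb : x (Fin.last (n+1)) = b)
    (h : ℝ) (hmesh : ∀ i : Fin (n+1), x i.succ - x i.castSucc ≤ h) :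
    Metric.hausdorffDist
      (metricLinComb (fun i : Fin (n+1) => (x i.succ - x i.castSucc) * k (x i.succ))
        (fun i : Fin (n+1) => (F (x i.succ) : Set (EuclideanSpace ℝ (Fin d)))))
      (metricLinComb (fun i : Fin (n+1) => (x i.succ - x i.castSucc) * k (x i.castSucc))
        (fun i : Fin (n+1) => (F (x i.castSucc) : Set (EuclideanSpace ℝ (Fin d)))))
      ≤ h * (Mk * (eVariationOn F (Set.Icc a b)).toReal
              + MF * (eVariationOn k (Set.Icc a b)).toReal) := by
  have hmem : ∀ j, x j ∈ Set.Icc a b := fun j =>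
    ⟨hxa ▸ hmono.monotone (Fin.zero_le j), hxb ▸ hmono.monotone (Fin.le_last j)⟩
  have hMF₀ : 0 ≤ MF := by
    obtain ⟨y, hy⟩ := (F (x 0)).nonempty
    exact (norm_nonneg y).trans (hMF _ (hmem 0) y hy)
  have hMk₀ : 0 ≤ Mk := (abs_nonneg _).trans (hMk _ (hmem 0))
  have hstep : ∀ i : Fin (n+1), |x i.succ - x i.castSucc| ≤ h := fun i =>
    (abs_of_pos (sub_pos.2 (hmono i.castSucc_lt_succ))).trans_le (hmesh i)
  have hh₀ : 0 ≤ h := (abs_nonneg _).trans (hstep 0)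
  rw [mul_add, ← mul_assoc, ← mul_assoc]
  refine hausdorffDist_metricLinComb_succ_castSucc_le
    (A := fun j => (F (x j) : Set (EuclideanSpace ℝ (Fin d))))
    (F (x 0)).isCompact (F (x 0)).nonempty (F (x (Fin.last _))).isCompact
    (F (x (Fin.last _))).nonempty _ _ (by positivity) fun Y hY =>
    (dist_sum_smul_sum_smul_le _ _ _ _ _).trans <|
      (Finset.sum_le_sum fun i _ => add_le_add ?_ ?_).trans <|
      hF.sum_fin_add_le hk hmono.monotone hmem (mul_nonneg hh₀ hMk₀) (mul_nonneg hh₀ hMF₀)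
  · rw [abs_mul, dist_comm]
    -- the `edist` of `NonemptyCompacts` is the Hausdorff edistance
    exact mul_le_mul (mul_le_mul (hstep i) (hMk _ (hmem _)) (abs_nonneg _) hh₀)
      ((hY.2 i).dist_le_hausdorffDist (edist_ne_top (F (x i.castSucc)) (F (x i.succ))))
      dist_nonneg (mul_nonneg hh₀ hMk₀)
  · rw [← mul_sub, abs_mul, mul_right_comm, dist_comm, Real.dist_eq]
    exact mul_le_mul_of_nonneg_right
      (mul_le_mul (hstep i) (hMF _ (hmem _) _ (hY.1 _)) (norm_nonneg _) hh₀) (abs_nonneg _)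

/-- For BV data `F : [a,b] → K(ℝ^d)` (nonempty compact values, variation in the
Hausdorff metric) and `k : [a,b] → ℝ`, and any partition `a = x_0 < ⋯ < x_{n+1} = b`
with mesh at most `h`, the Hausdorff distance between the right weighted metric Riemann
sum `⊕ (x_{i+1}−x_i) k(x_{i+1}) F(x_{i+1})` and the left weighted metric Riemann sum
`⊕ (x_{i+1}−x_i) k(x_i) F(x_i)` is at most `h (‖k‖_∞ V_a^b(F) + ‖F‖_∞ V_a^b(k))`. -/
theorem hausdorffDist_weighted_metric_riemann_sums {d : ℕ}
    (a b : ℝ) (hab : a < b)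
    (F : ℝ → TopologicalSpace.NonemptyCompacts (EuclideanSpace ℝ (Fin d)))
    (k : ℝ → ℝ)
    (hF : BoundedVariationOn F (Set.Icc a b))
    (hk : BoundedVariationOn k (Set.Icc a b))
    (MF Mk : ℝ)
    (hMF : ∀ x ∈ Set.Icc a b, ∀ y ∈ (F x : Set (EuclideanSpace ℝ (Fin d))), ‖y‖ ≤ MF)
    (hMk : ∀ x ∈ Set.Icc a b, |k x| ≤ Mk)
    (n : ℕ) (x : Fin (n+2) → ℝ) (hmono : StrictMono x)
    (hxa : x 0 = a) (hxb : x (Fin.last (n+1)) = b)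
    (h : ℝ) (hmesh : ∀ i : Fin (n+1), x i.succ - x i.castSucc ≤ h) :
    Metric.hausdorffDist
      (metricLinComb (fun i : Fin (n+1) => (x i.succ - x i.castSucc) * k (x i.succ))
        (fun i : Fin (n+1) => (F (x i.succ) : Set (EuclideanSpace ℝ (Fin d)))))
      (metricLinComb (fun i : Fin (n+1) => (x i.succ - x i.castSucc) * k (x i.castSucc))
        (fun i : Fin (n+1) => (F (x i.castSucc) : Set (EuclideanSpace ℝ (Fin d)))))
      ≤ h * (Mk * (eVariationOn F (Set.Icc a b)).toReal
              + MF * (eVariationOn k (Set.Icc a b)).toReal) :=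
  hausdorffDist_weighted_metric_riemann_sums_general a b F k hF hk MF Mk hMF hMk n x hmono hxa hxb h
    hmesh
end

section
/- Let F : [a,b] → K(ℝ^d) be a bounded-variation multifunction with compact graph, and let c_{χ,φ} be a chain function corresponding to a partition χ and metric chain φ. Then for every x* ∈ [a,b] and δ > 0, the two-sided local modulus satisfies ω(c_{χ,φ}, x*, δ) ≤ ω(v_F, x*, δ + 2|χ|), where v_F is the variation function of F in the Hausdorff metric. -/
open Set Filter Topology

/-- Two-sided local modulus of continuity
`ω(f,xs,δ) = sup{ρ(f(x₁),f(x₂)) : x₁,x₂ ∈ [xs−δ/2, xs+δ/2] ∩ [a,b]}`. -/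
noncomputable def omegaLocal {X : Type*} [PseudoEMetricSpace X]
    (f : ℝ → X) (a b xs δ : ℝ) : ENNReal :=
  ⨆ x₁ ∈ Set.Icc (xs - δ/2) (xs + δ/2) ∩ Set.Icc a b,
    ⨆ x₂ ∈ Set.Icc (xs - δ/2) (xs + δ/2) ∩ Set.Icc a b, edist (f x₁) (f x₂)

/-- Let `F : [a,b] → K(ℝ^d)` be a BV multifunction (nonempty compact values, variation
in the Hausdorff metric) with compact graph, and let `c` be a chain function built from
a partition `a = x_0 < ⋯ < x_{n+1} = b` of mesh at most `h` and a metric chain `y`.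
Then `ω(c, xs, δ) ≤ ω(v_F, xs, δ + 2h)` for every `xs ∈ [a,b]`, `δ > 0`, where
`v_F(t) = V_a^t(F)`. -/
theorem omegaLocal_chainFunction_le {d : ℕ} (a b : ℝ) (hab : a < b)
    (F : ℝ → TopologicalSpace.NonemptyCompacts (EuclideanSpace ℝ (Fin d)))
    (hF : BoundedVariationOn F (Set.Icc a b))
    (n : ℕ) (x : Fin (n+2) → ℝ) (hmono : StrictMono x)
    (hxa : x 0 = a) (hxb : x (Fin.last (n+1)) = b)
    (y : Fin (n+2) → EuclideanSpace ℝ (Fin d))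
    (hmem : ∀ i, y i ∈ (F (x i) : Set (EuclideanSpace ℝ (Fin d))))
    (hchain : ∀ i : Fin (n+1),
      IsMetricPair (F (x i.castSucc) : Set (EuclideanSpace ℝ (Fin d)))
        (F (x i.succ) : Set (EuclideanSpace ℝ (Fin d))) (y i.castSucc) (y i.succ))
    (c : ℝ → EuclideanSpace ℝ (Fin d))
    (hc : ∀ i : Fin (n+1), ∀ t ∈ Set.Ico (x i.castSucc) (x i.succ), c t = y i.castSucc)
    (hcb : c b = y (Fin.last (n+1)))
    (h : ℝ) (hmesh : ∀ i : Fin (n+1), x i.succ - x i.castSucc ≤ h)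
    (xs : ℝ) (hxs : xs ∈ Set.Icc a b) (δ : ℝ) (hδ : 0 < δ) :
    omegaLocal c a b xs δ ≤
      omegaLocal (fun t => variationOnFromTo F (Set.Icc a b) a t) a b xs (δ + 2*h) := by
  have hxmem : ∀ i, x i ∈ Set.Icc a b := fun i =>
    ⟨hxa ▸ hmono.monotone (Fin.zero_le i), hxb ▸ hmono.monotone (Fin.le_last i)⟩
  have hh : 0 < h :=
    lt_of_lt_of_le (sub_pos.2 (hmono (Fin.castSucc_lt_succ (i := 0)))) (hmesh 0)
  have hlbv := hF.locallyBoundedVariationOn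
  have ha : a ∈ Set.Icc a b := left_mem_Icc.2 hab.le
  -- the chain-link bound: consecutive chain points are at Hausdorff distance apart
  have key : ∀ i : Fin (n+1),
      edist (y i.castSucc) (y i.succ) ≤ edist (F (x i.castSucc)) (F (x i.succ)) := by
    intro i
    obtain ⟨hp, hq, hcase⟩ := hchain i
    have hA : (F (x i.castSucc) : Set (EuclideanSpace ℝ (Fin d))).Nonempty := (F _).nonempty
    have hB : (F (x i.succ) : Set (EuclideanSpace ℝ (Fin d))).Nonempty := (F _).nonempty
    have hedist : edist (F (x i.castSucc)) (F (x i.succ))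
        = EMetric.hausdorffEdist (F (x i.castSucc) : Set (EuclideanSpace ℝ (Fin d)))
            (F (x i.succ) : Set (EuclideanSpace ℝ (Fin d))) := rfl
    rcases hcase with hq' | hp'
    · calc edist (y i.castSucc) (y i.succ)
          = EMetric.infEdist (y i.succ)
              (F (x i.castSucc) : Set (EuclideanSpace ℝ (Fin d))) := by
            rw [edist_comm, edist_dist, hq', Metric.infDist,
              ENNReal.ofReal_toReal (Metric.infEdist_ne_top hA)]; rfl
        _ ≤ EMetric.hausdorffEdist (F (x i.succ) : Set (EuclideanSpace ℝ (Fin d)))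
              (F (x i.castSucc) : Set (EuclideanSpace ℝ (Fin d))) :=
            EMetric.infEdist_le_hausdorffEdist_of_mem hq
        _ = edist (F (x i.castSucc)) (F (x i.succ)) := by
            rw [hedist]; exact Metric.hausdorffEDist_comm
    · calc edist (y i.castSucc) (y i.succ)
          = EMetric.infEdist (y i.castSucc)
              (F (x i.succ) : Set (EuclideanSpace ℝ (Fin d))) := by
            rw [edist_dist, hp', Metric.infDist,
              ENNReal.ofReal_toReal (Metric.infEdist_ne_top hB)]; rfl
        _ ≤ EMetric.hausdorffEdist (F (x i.castSucc) : Set (EuclideanSpace ℝ (Fin d)))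
              (F (x i.succ) : Set (EuclideanSpace ℝ (Fin d))) :=
            EMetric.infEdist_le_hausdorffEdist_of_mem hp
        _ = edist (F (x i.castSucc)) (F (x i.succ)) := hedist.symm
  -- distance between chain points is at most the variation between partition points
  have step : ∀ p q : Fin (n+2), p ≤ q →
      edist (y p) (y q) ≤ eVariationOn F (Set.Icc a b ∩ Set.Icc (x p) (x q)) := by
    intro p q hpq
    obtain ⟨m, hm⟩ : ∃ m : ℕ, (q : ℕ) = (p : ℕ) + m := ⟨q - p, by omega⟩
    clear hpq
    induction m generalizing q with
    | zero =>
      have : q = p := Fin.ext (by omega)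
      subst this
      simp
    | succ m ih =>
      have hqn : (q : ℕ) ≤ n + 1 := Nat.lt_succ_iff.1 q.isLt
      have hple : (p : ℕ) + m ≤ n := by omega
      set i : Fin (n+1) := ⟨(p : ℕ) + m, by omega⟩ with hi
      have hq : q = i.succ := Fin.ext (by simp [hi, Fin.val_succ]; omega)
      have hqc : (i.castSucc : ℕ) = (p : ℕ) + m := rfl
      have hprev := ih i.castSucc hqc.symm
      have hpq' : p ≤ i.castSucc := by
        rw [Fin.le_def]; omega
      have hq'q : i.castSucc ≤ i.succ := (Fin.castSucc_lt_succ (i := i)).le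
      have hx1 : x p ≤ x i.castSucc := hmono.monotone hpq'
      have hx2 : x i.castSucc ≤ x i.succ := hmono.monotone hq'q
      have hlink : edist (y i.castSucc) (y i.succ) ≤
          eVariationOn F (Set.Icc a b ∩ Set.Icc (x i.castSucc) (x i.succ)) := by
        refine (key i).trans (eVariationOn.edist_le F ?_ ?_)
        · exact ⟨hxmem _, le_refl _, hx2⟩
        · exact ⟨hxmem _, hx2, le_refl _⟩
      calc edist (y p) (y q)
          ≤ edist (y p) (y i.castSucc) + edist (y i.castSucc) (y q) := edist_triangle _ _ _
        _ ≤ eVariationOn F (Set.Icc a b ∩ Set.Icc (x p) (x i.castSucc))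
            + eVariationOn F (Set.Icc a b ∩ Set.Icc (x i.castSucc) (x i.succ)) := by
            rw [hq]; exact add_le_add hprev hlink
        _ = eVariationOn F (Set.Icc a b ∩ Set.Icc (x p) (x q)) := by
            rw [hq]; exact eVariationOn.Icc_add_Icc F hx1 hx2 (hxmem _)
  have hvne : ∀ p q : Fin (n+2),
      eVariationOn F (Set.Icc a b ∩ Set.Icc (x p) (x q)) ≠ ⊤ :=
    fun p q => hF.mono inter_subset_left
  -- translate to the variation function v_F
  have vstep' : ∀ p q : Fin (n+2), p ≤ q →
      edist (y p) (y q) ≤ edist (variationOnFromTo F (Set.Icc a b) a (x p))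
        (variationOnFromTo F (Set.Icc a b) a (x q)) := by
    intro p q hpq
    have hxpq : x p ≤ x q := hmono.monotone hpq
    have hvadd : variationOnFromTo F (Set.Icc a b) a (x p)
        + variationOnFromTo F (Set.Icc a b) (x p) (x q)
        = variationOnFromTo F (Set.Icc a b) a (x q) :=
      variationOnFromTo.add hlbv ha (hxmem p) (hxmem q)
    have hnn : 0 ≤ variationOnFromTo F (Set.Icc a b) (x p) (x q) :=
      variationOnFromTo.nonneg_of_le _ _ hxpq
    have hsub : variationOnFromTo F (Set.Icc a b) a (x p)
        - variationOnFromTo F (Set.Icc a b) a (x q)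
        = -(variationOnFromTo F (Set.Icc a b) (x p) (x q)) := by linarith
    rw [edist_dist (variationOnFromTo F (Set.Icc a b) a (x p)),
      Real.dist_eq, hsub, abs_neg, abs_of_nonneg hnn,
      variationOnFromTo.eq_of_le _ _ hxpq, ENNReal.ofReal_toReal (hvne p q)]
    exact step p q hpq
  have vstep : ∀ p q : Fin (n+2),
      edist (y p) (y q) ≤ edist (variationOnFromTo F (Set.Icc a b) a (x p))
        (variationOnFromTo F (Set.Icc a b) a (x q)) := by
    intro p q
    rcases le_total p q with hpq | hqp
    · exact vstep' p q hpq
    · rw [edist_comm (y p), edist_comm (variationOnFromTo F (Set.Icc a b) a (x p))]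
      exact vstep' q p hqp
  -- locating each point of [a,b] in the partition
  have locate : ∀ t ∈ Set.Icc a b, ∃ i : Fin (n+2),
      c t = y i ∧ x i ≤ t ∧ t ≤ x i + h := by
    intro t ht
    rcases eq_or_lt_of_le ht.2 with heq | htb
    · subst heq
      exact ⟨Fin.last (n+1), hcb, hxb.le, by rw [hxb]; linarith⟩
    · classical
      set S := Finset.univ.filter (fun i : Fin (n+2) => x i ≤ t) with hS
      have hSne : S.Nonempty := ⟨0, by simp [hS, hxa, ht.1]⟩
      set i₀ := S.max' hSne with hi₀def
      have hi₀ : x i₀ ≤ t := by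
        have := S.max'_mem hSne
        simpa [hS] using this
      have hne : i₀ ≠ Fin.last (n+1) := by
        intro e; rw [e, hxb] at hi₀; exact absurd hi₀ (not_le.2 htb)
      set j : Fin (n+1) := i₀.castPred hne with hj
      have hjc : j.castSucc = i₀ := Fin.castSucc_castPred _ _
      have hsucc : t < x j.succ := by
        by_contra hcon
        push_neg at hcon
        have hmemS : j.succ ∈ S := by simp [hS, hcon]
        have hle := S.le_max' _ hmemS
        rw [← hi₀def] at hle
        rw [← hjc] at hle
        exact absurd hle (not_le.2 (Fin.castSucc_lt_succ (i := j)))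
      refine ⟨i₀, ?_, hi₀, ?_⟩
      · rw [← hjc]
        exact hc j t ⟨by rw [hjc]; exact hi₀, hsucc⟩
      · have hms := hmesh j
        rw [hjc] at hms
        have := hsucc.le
        linarith
  -- conclusion
  rw [omegaLocal, omegaLocal]
  refine iSup₂_le fun t₁ ht₁ => iSup₂_le fun t₂ ht₂ => ?_
  obtain ⟨i₁, hc₁, hle₁, hub₁⟩ := locate t₁ ht₁.2
  obtain ⟨i₂, hc₂, hle₂, hub₂⟩ := locate t₂ ht₂.2
  have hm₁ : x i₁ ∈ Set.Icc (xs - (δ+2*h)/2) (xs + (δ+2*h)/2) ∩ Set.Icc a b :=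
    ⟨⟨by linarith [ht₁.1.1], by linarith [ht₁.1.2]⟩, hxmem i₁⟩
  have hm₂ : x i₂ ∈ Set.Icc (xs - (δ+2*h)/2) (xs + (δ+2*h)/2) ∩ Set.Icc a b :=
    ⟨⟨by linarith [ht₂.1.1], by linarith [ht₂.1.2]⟩, hxmem i₂⟩
  calc edist (c t₁) (c t₂) = edist (y i₁) (y i₂) := by rw [hc₁, hc₂]
    _ ≤ edist (variationOnFromTo F (Set.Icc a b) a (x i₁))
        (variationOnFromTo F (Set.Icc a b) a (x i₂)) := vstep i₁ i₂
    _ ≤ ⨆ t₂ ∈ Set.Icc (xs - (δ+2*h)/2) (xs + (δ+2*h)/2) ∩ Set.Icc a b,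
        edist (variationOnFromTo F (Set.Icc a b) a (x i₁))
          (variationOnFromTo F (Set.Icc a b) a t₂) := le_biSup (fun t₂ => edist (variationOnFromTo F (Set.Icc a b) a (x i₁))
          (variationOnFromTo F (Set.Icc a b) a t₂)) hm₂
    _ ≤ _ := le_biSup (fun t₁ =>
        ⨆ t₂ ∈ Set.Icc (xs - (δ+2*h)/2) (xs + (δ+2*h)/2) ∩ Set.Icc a b,
          edist (variationOnFromTo F (Set.Icc a b) a t₁)
            (variationOnFromTo F (Set.Icc a b) a t₂)) hm₁
end

section
/- Let F : [a,b] → K(ℝ^d) be a bounded-variation multifunction with compact graph and s a metric selection of F (a pointwise limit of chain functions corresponding to partitions with mesh tending to zero). Then for every x* ∈ [a,b] and δ > 0, ω⁻(s, x*, δ) ≤ ω⁻(v_F, x*, 2δ). In particular, if F is left continuous at x* (in the Hausdorff metric) then s is left continuous at x*. -/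
/-! A chain function is constant on each cell of its partition, equal to the chain value at the
left node, and consecutive chain values form a metric pair, so their distance is at most the
Hausdorff distance of the corresponding values of `F`, hence at most the increment of the
variation function `v_F` between the two nodes. Telescoping, for `x ≤ xs` the distance between
the chain values at `x` and `xs` is at most `v_F xs - v_F u`, where `u ≤ x` is the node of the cell
of `x`, within one mesh of `x`. Once the mesh is below `δ`, `u` lies in `[xs - 2δ, xs]`, and the
bound passes to the pointwise limit `s`. If `F` is left continuous at `xs`, so is `v_F`, hence
`ω⁻(v_F, xs, 2δ)` and with it `ω⁻(s, xs, δ)` tend to `0` with `δ`. -/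

open Set Filter Topology

/-- `c` is a chain function of `F` on `[a,b]` built from a partition of mesh at most
`h` and a corresponding metric chain. -/
def IsChainFunction {d : ℕ} (a b : ℝ)
    (F : ℝ → TopologicalSpace.NonemptyCompacts (EuclideanSpace ℝ (Fin d)))
    (c : ℝ → EuclideanSpace ℝ (Fin d)) (h : ℝ) : Prop :=
  ∃ (n : ℕ) (x : Fin (n+2) → ℝ) (y : Fin (n+2) → EuclideanSpace ℝ (Fin d)),
    StrictMono x ∧ x 0 = a ∧ x (Fin.last (n+1)) = b ∧
    (∀ i : Fin (n+1), x i.succ - x i.castSucc ≤ h) ∧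
    (∀ i, y i ∈ (F (x i) : Set (EuclideanSpace ℝ (Fin d)))) ∧
    (∀ i : Fin (n+1),
      IsMetricPair (F (x i.castSucc) : Set (EuclideanSpace ℝ (Fin d)))
        (F (x i.succ) : Set (EuclideanSpace ℝ (Fin d))) (y i.castSucc) (y i.succ)) ∧
    (∀ i : Fin (n+1), ∀ t ∈ Set.Ico (x i.castSucc) (x i.succ), c t = y i.castSucc) ∧
    c b = y (Fin.last (n+1))

/-- `s` is a metric selection of `F` on `[a,b]`: a selection which is the pointwise
limit of chain functions of `F` corresponding to partitions with mesh tending to `0`. -/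
def IsMetricSelection {d : ℕ} (a b : ℝ)
    (F : ℝ → TopologicalSpace.NonemptyCompacts (EuclideanSpace ℝ (Fin d)))
    (s : ℝ → EuclideanSpace ℝ (Fin d)) : Prop :=
  (∀ t ∈ Set.Icc a b, s t ∈ (F t : Set (EuclideanSpace ℝ (Fin d)))) ∧
  ∃ (c : ℕ → ℝ → EuclideanSpace ℝ (Fin d)) (h : ℕ → ℝ),
    (∀ k, IsChainFunction a b F (c k) (h k)) ∧
    Tendsto h atTop (𝓝 0) ∧
    (∀ t ∈ Set.Icc a b, Tendsto (fun k => c k t) atTop (𝓝 (s t)))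

theorem IsMetricPair.dist_le {E : Type*} [MetricSpace E]
    {A B : TopologicalSpace.NonemptyCompacts E} {p q : E}
    (h : IsMetricPair (A : Set E) B p q) : dist p q ≤ dist A B := by
  obtain ⟨hp, hq, hpq | hpq⟩ := h
  · rw [dist_comm, hpq, dist_comm, Metric.NonemptyCompacts.dist_eq]
    exact Metric.infDist_le_hausdorffDist_of_mem hq (edist_ne_top B A)
  · rw [hpq, Metric.NonemptyCompacts.dist_eq]
    exact Metric.infDist_le_hausdorffDist_of_mem hp (edist_ne_top A B)

theorem dist_le_variationOnFromTo_sub {α E : Type*} [LinearOrder α] [PseudoMetricSpace E]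
    {f : α → E} {S : Set α} (hf : LocallyBoundedVariationOn f S) {a u w : α} (ha : a ∈ S)
    (hu : u ∈ S) (hw : w ∈ S) (huw : u ≤ w) :
    dist (f u) (f w) ≤ variationOnFromTo f S a w - variationOnFromTo f S a u := by
  rw [← variationOnFromTo.add hf ha hu hw, add_sub_cancel_left,
    variationOnFromTo.eq_of_le f S huw, dist_edist]
  exact ENNReal.toReal_mono (hf u w hu hw)
    (eVariationOn.edist_le f ⟨hu, le_rfl, huw⟩ ⟨hw, huw, le_rfl⟩)

theorem dist_le_sub_of_dist_succ_le {E : Type*} [PseudoMetricSpace E] {n : ℕ}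
    {y : Fin (n + 1) → E} {g : Fin (n + 1) → ℝ}
    (hstep : ∀ k : Fin n, dist (y k.castSucc) (y k.succ) ≤ g k.succ - g k.castSucc)
    {i j : Fin (n + 1)} (hij : i ≤ j) : dist (y i) (y j) ≤ g j - g i := by
  induction j using Fin.induction with
  | zero => simp [Fin.le_zero_iff.mp hij]
  | succ k ih =>
    rcases hij.eq_or_lt with rfl | hlt
    · simp
    · have := ih (Fin.le_castSucc_iff.mpr hlt)
      linarith [hstep k, dist_triangle (y i) (y k.castSucc) (y k.succ)]

theorem exists_greatest_node_le {E : Type*} {n : ℕ} {x : Fin (n + 2) → ℝ}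
    {y : Fin (n + 2) → E} {c : ℝ → E} {h t : ℝ} (hx : StrictMono x)
    (hmesh : ∀ i : Fin (n + 1), x i.succ - x i.castSucc ≤ h)
    (hc : ∀ i : Fin (n + 1), ∀ t ∈ Ico (x i.castSucc) (x i.succ), c t = y i.castSucc)
    (hc_last : c (x (Fin.last (n + 1))) = y (Fin.last (n + 1)))
    (h0t : x 0 ≤ t) (ht_last : t ≤ x (Fin.last (n + 1))) :
    ∃ i, x i ≤ t ∧ t - h ≤ x i ∧ c t = y i ∧ ∀ j, x j ≤ t → j ≤ i := by
  classical
  obtain ⟨i, hi, hmax⟩ :=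
    (Finset.univ.filter (x · ≤ t)).exists_max_image id ⟨0, by simpa using h0t⟩
  simp only [Finset.mem_filter, Finset.mem_univ, true_and, id] at hi hmax
  induction i using Fin.lastCases with
  | last =>
    have ht : t = x (Fin.last (n + 1)) := le_antisymm ht_last hi
    have hh : 0 < h := by linarith [hmesh 0, hx (Fin.castSucc_lt_succ (i := (0 : Fin (n + 1))))]
    exact ⟨_, hi, by linarith, by rw [ht, hc_last], hmax⟩
  | cast k =>
    have hlt : t < x k.succ := lt_of_not_ge fun hle => (hmax _ hle).not_gt Fin.castSucc_lt_succ
    exact ⟨_, hi, by linarith [hmesh k], hc k t ⟨hi, hlt⟩, hmax⟩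

theorem IsChainFunction.exists_dist_le {d : ℕ} {a b h : ℝ}
    {F : ℝ → TopologicalSpace.NonemptyCompacts (EuclideanSpace ℝ (Fin d))}
    {c : ℝ → EuclideanSpace ℝ (Fin d)} (hc : IsChainFunction a b F c h)
    (hF : LocallyBoundedVariationOn F (Icc a b)) {t t' : ℝ} (hat : a ≤ t) (htt' : t ≤ t')
    (ht'b : t' ≤ b) :
    ∃ u ∈ Icc a t, t - h ≤ u ∧ dist (c t) (c t') ≤
      variationOnFromTo F (Icc a b) a t' - variationOnFromTo F (Icc a b) a u := by
  obtain ⟨n, x, y, hx, hx0, hx_last, hmesh, -, hpair, hcx, hc_last⟩ := hc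
  set v := variationOnFromTo F (Icc a b) a
  have hxS (i : Fin (n + 2)) : x i ∈ Icc a b :=
    ⟨hx0 ▸ hx.monotone (Fin.zero_le i), hx_last ▸ hx.monotone (Fin.le_last i)⟩
  have haS : a ∈ Icc a b := hx0 ▸ hxS 0
  obtain ⟨i, hit, hti, hct, -⟩ := exists_greatest_node_le hx hmesh hcx (hx_last ▸ hc_last)
    (hx0 ▸ hat) (hx_last ▸ htt'.trans ht'b)
  obtain ⟨j, hjt', -, hct', hmax'⟩ := exists_greatest_node_le hx hmesh hcx (hx_last ▸ hc_last)
    (hx0 ▸ hat.trans htt') (hx_last ▸ ht'b)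
  have hchain : dist (y i) (y j) ≤ v (x j) - v (x i) := by
    refine dist_le_sub_of_dist_succ_le (g := fun i => v (x i)) (fun k => ?_)
      (hmax' i (hit.trans htt'))
    calc dist (y k.castSucc) (y k.succ) ≤ dist (F (x k.castSucc)) (F (x k.succ)) :=
          (hpair k).dist_le
      _ ≤ v (x k.succ) - v (x k.castSucc) :=
          dist_le_variationOnFromTo_sub hF haS (hxS _) (hxS _)
            (hx.monotone (Fin.castSucc_le_succ k))
  have hvj : v (x j) ≤ v t' :=
    variationOnFromTo.monotoneOn hF haS (hxS j) ⟨hat.trans htt', ht'b⟩ hjt'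
  exact ⟨x i, ⟨(hxS i).1, hit⟩, hti, by rw [hct, hct']; linarith⟩

theorem edist_le_omegaMinus {X : Type*} [PseudoEMetricSpace X] {f : ℝ → X} {a b xs δ x : ℝ}
    (hx : x ∈ Icc (xs - δ) xs ∩ Icc a b) : edist (f x) (f xs) ≤ omegaMinus f a b xs δ :=
  le_iSup₂ (f := fun t (_ : t ∈ Icc (xs - δ) xs ∩ Icc a b) => edist (f t) (f xs)) x hx

theorem IsChainFunction.edist_le_omegaMinus {d : ℕ} {a b h δ xs x : ℝ}
    {F : ℝ → TopologicalSpace.NonemptyCompacts (EuclideanSpace ℝ (Fin d))}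
    {c : ℝ → EuclideanSpace ℝ (Fin d)} (hc : IsChainFunction a b F c h)
    (hF : LocallyBoundedVariationOn F (Icc a b)) (hhδ : h ≤ δ) (hxs : xs ≤ b)
    (hx : x ∈ Icc (xs - δ) xs ∩ Icc a b) :
    edist (c x) (c xs) ≤ omegaMinus (variationOnFromTo F (Icc a b) a) a b xs (2 * δ) := by
  obtain ⟨⟨hδx, hxxs⟩, hax, -⟩ := hx
  obtain ⟨u, ⟨hau, hux⟩, hxu, hdist⟩ := hc.exists_dist_le hF hax hxxs hxs
  set v := variationOnFromTo F (Icc a b) a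
  calc edist (c x) (c xs) = ENNReal.ofReal (dist (c x) (c xs)) := edist_dist _ _
    _ ≤ ENNReal.ofReal (dist (v u) (v xs)) := by
        refine ENNReal.ofReal_le_ofReal (hdist.trans ?_)
        rw [Real.dist_eq, abs_sub_comm]
        exact le_abs_self _
    _ = edist (v u) (v xs) := (edist_dist _ _).symm
    _ ≤ omegaMinus v a b xs (2 * δ) :=
        _root_.edist_le_omegaMinus ⟨⟨by linarith, hux.trans hxxs⟩, hau, (hux.trans hxxs).trans hxs⟩

theorem IsMetricSelection.omegaMinus_le {d : ℕ} {a b δ xs : ℝ}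
    {F : ℝ → TopologicalSpace.NonemptyCompacts (EuclideanSpace ℝ (Fin d))}
    {s : ℝ → EuclideanSpace ℝ (Fin d)} (hs : IsMetricSelection a b F s)
    (hF : LocallyBoundedVariationOn F (Icc a b)) (hxs : xs ∈ Icc a b) (hδ : 0 < δ) :
    omegaMinus s a b xs δ ≤ omegaMinus (variationOnFromTo F (Icc a b) a) a b xs (2 * δ) := by
  obtain ⟨-, c, h, hc, hh, hcs⟩ := hs
  refine iSup₂_le fun x hx => le_of_tendsto ((hcs x hx.2).edist (hcs xs hxs)) ?_
  filter_upwards [hh.eventually_lt_const hδ] with k hk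
  exact (hc k).edist_le_omegaMinus hF hk.le hxs.2 hx

theorem LocallyBoundedVariationOn.continuousWithinAt_variationOnFromTo_Iic {α E : Type*}
    [LinearOrder α] [TopologicalSpace α] [OrderTopology α] [PseudoMetricSpace E] {f : α → E}
    {S : Set α} (hf : LocallyBoundedVariationOn f S) {a x : α} (ha : a ∈ S) (hx : x ∈ S)
    (hfx : ContinuousWithinAt f (S ∩ Iic x) x) :
    ContinuousWithinAt (variationOnFromTo f S a) (S ∩ Iic x) x := by
  have hS : S ∩ Iic x = insert x (S ∩ Iio x) := by
    rw [insert_inter_distrib, insert_eq_of_mem hx, Iio_insert]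
  rw [hS, continuousWithinAt_insert_self] at hfx ⊢
  simpa [ContinuousWithinAt] using variationOnFromTo.tendsto_left ha hx hf hfx

theorem tendsto_omegaMinus_zero {X : Type*} [PseudoEMetricSpace X] {f : ℝ → X} {a b xs : ℝ}
    (hf : ContinuousWithinAt f (Icc a xs) xs) :
    Tendsto (omegaMinus f a b xs) (𝓝[>] 0) (𝓝 0) := by
  rw [ENNReal.tendsto_nhds_zero]
  intro ε hε
  have hfε := ENNReal.tendsto_nhds_zero.1 (tendsto_iff_edist_tendsto_0.1 hf) ε hε
  obtain ⟨η, hη, hball⟩ := Metric.mem_nhdsWithin_iff.1 hfε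
  filter_upwards [Ioo_mem_nhdsGT hη] with δ hδ
  refine iSup₂_le fun x ⟨⟨hδx, hxxs⟩, hax, _⟩ => hball ⟨?_, hax, hxxs⟩
  rw [Metric.mem_ball, Real.dist_eq, abs_of_nonpos (by linarith)]
  linarith [hδ.2]

theorem continuousWithinAt_of_tendsto_omegaMinus {X : Type*} [PseudoEMetricSpace X]
    {f : ℝ → X} {a b xs : ℝ} (hxs : xs ≤ b)
    (hf : Tendsto (omegaMinus f a b xs) (𝓝[>] 0) (𝓝 0)) :
    ContinuousWithinAt f (Icc a xs) xs := by
  rw [ContinuousWithinAt, tendsto_iff_edist_tendsto_0, ENNReal.tendsto_nhds_zero]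
  intro ε hε
  obtain ⟨η, hη : 0 < η, hsmall⟩ :=
    mem_nhdsGT_iff_exists_Ioo_subset.1 (ENNReal.tendsto_nhds_zero.1 hf ε hε)
  filter_upwards [self_mem_nhdsWithin,
    nhdsWithin_le_nhds (Ioi_mem_nhds (show xs - η < xs by linarith))] with x hx hxη
  rcases hx.2.eq_or_lt with rfl | hlt
  · simp
  · refine (edist_le_omegaMinus ⟨⟨le_of_eq (by ring), hx.2⟩, hx.1, hx.2.trans hxs⟩).trans
      (hsmall ⟨sub_pos.2 hlt, ?_⟩)
    linarith [show xs - η < x from hxη]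

theorem omegaMinus_metricSelection_le_general {d : ℕ} (a b : ℝ)
    (F : ℝ → TopologicalSpace.NonemptyCompacts (EuclideanSpace ℝ (Fin d)))
    (hF : BoundedVariationOn F (Set.Icc a b))
    (s : ℝ → EuclideanSpace ℝ (Fin d)) (hs : IsMetricSelection a b F s)
    (xs : ℝ) (hxs : xs ∈ Set.Icc a b) :
    (∀ δ : ℝ, 0 < δ →
      omegaMinus s a b xs δ ≤
        omegaMinus (fun t => variationOnFromTo F (Set.Icc a b) a t) a b xs (2*δ)) ∧
    (ContinuousWithinAt F (Set.Icc a xs) xs → ContinuousWithinAt s (Set.Icc a xs) xs) := by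
  have hF' := hF.locallyBoundedVariationOn
  have hωs (δ : ℝ) (hδ : 0 < δ) := hs.omegaMinus_le hF' hxs hδ
  refine ⟨hωs, fun hFc => ?_⟩
  have hIcc : Icc a b ∩ Iic xs = Icc a xs := by
    ext t
    simp only [mem_inter_iff, mem_Icc, mem_Iic]
    exact ⟨fun ⟨⟨hat, _⟩, htxs⟩ => ⟨hat, htxs⟩, fun ⟨hat, htxs⟩ => ⟨⟨hat, htxs.trans hxs.2⟩, htxs⟩⟩
  have hv : ContinuousWithinAt (variationOnFromTo F (Icc a b) a) (Icc a xs) xs := by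
    rw [← hIcc] at hFc ⊢
    exact hF'.continuousWithinAt_variationOnFromTo_Iic ⟨le_rfl, hxs.1.trans hxs.2⟩ hxs hFc
  have hdouble : Tendsto (fun δ : ℝ => 2 * δ) (𝓝[>] 0) (𝓝[>] 0) := by
    refine tendsto_nhdsWithin_of_tendsto_nhds_of_eventually_within _ ?_ ?_
    · simpa using ((continuous_const_mul (2 : ℝ)).tendsto 0).mono_left nhdsWithin_le_nhds
    · filter_upwards [self_mem_nhdsWithin] with δ hδ using mul_pos two_pos (mem_Ioi.1 hδ)
  refine continuousWithinAt_of_tendsto_omegaMinus hxs.2 <|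
    tendsto_of_tendsto_of_tendsto_of_le_of_le' tendsto_const_nhds
      ((tendsto_omegaMinus_zero (b := b) hv).comp hdouble)
      (Eventually.of_forall fun _ => zero_le) ?_
  filter_upwards [self_mem_nhdsWithin] with δ hδ using hωs δ (mem_Ioi.1 hδ)

/-- For a BV multifunction `F : [a,b] → K(ℝ^d)` (variation in the Hausdorff metric)
and a metric selection `s` of `F`: `ω⁻(s, xs, δ) ≤ ω⁻(v_F, xs, 2δ)` for every
`xs ∈ [a,b]` and `δ > 0`; in particular, if `F` is left continuous at `xs` (in the
Hausdorff metric), then `s` is left continuous at `xs`. -/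
theorem omegaMinus_metricSelection_le {d : ℕ} (a b : ℝ) (hab : a < b)
    (F : ℝ → TopologicalSpace.NonemptyCompacts (EuclideanSpace ℝ (Fin d)))
    (hF : BoundedVariationOn F (Set.Icc a b))
    (s : ℝ → EuclideanSpace ℝ (Fin d)) (hs : IsMetricSelection a b F s)
    (xs : ℝ) (hxs : xs ∈ Set.Icc a b) :
    (∀ δ : ℝ, 0 < δ →
      omegaMinus s a b xs δ ≤
        omegaMinus (fun t => variationOnFromTo F (Set.Icc a b) a t) a b xs (2*δ)) ∧
    (ContinuousWithinAt F (Set.Icc a xs) xs → ContinuousWithinAt s (Set.Icc a xs) xs) :=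
  omegaMinus_metricSelection_le_general a b F hF s hs xs hxs
end
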